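/- Let $\delta \geq 1$ be an integer and $u, v$ real numbers. Then $\sum_{j=0}^{2\delta} u^j v^{2\delta-j} \geq \frac{1}{2}(u^{2\delta} + v^{2\delta})$. -/

import Mathlib

/-- Algebraic inequality for the symmetric power sum:
`∑_{j=0}^{2δ} u^j v^{2δ-j} ≥ (1/2)(u^{2δ} + v^{2δ})`. -/
theorem symmetric_power_sum_lower_bound (δ : ℕ) (hδ : 1 ≤ δ) (u v : ℝ) :
    (1 / 2) * (u ^ (2 * δ) + v ^ (2 * δ))
      ≤ ∑ j ∈ Finset.range (2 * δ + 1), u ^ j * v ^ (2 * δ - j) := by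
  have key : ∀ a b : ℝ, b < a →
      (1 / 2) * (a ^ (2 * δ) + b ^ (2 * δ))
        ≤ ∑ j ∈ Finset.range (2 * δ + 1), a ^ j * b ^ (2 * δ - j) := by
    intro a b hab
    have hpos : 0 < a - b := by linarith
    have geom := geom_sum₂_mul a b (2 * δ + 1)
    simp only [Nat.add_sub_cancel] at geom
    set S := ∑ j ∈ Finset.range (2 * δ + 1), a ^ j * b ^ (2 * δ - j) with hS
    have hT : (0 : ℝ) ≤ ∑ i ∈ Finset.range δ, (a ^ 2) ^ i * (b ^ 2) ^ (δ - 1 - i) := by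
      apply Finset.sum_nonneg
      intro i _
      positivity
    set T := ∑ i ∈ Finset.range δ, (a ^ 2) ^ i * (b ^ 2) ^ (δ - 1 - i) with hTdef
    have geom2 := geom_sum₂_mul (a ^ 2) (b ^ 2) δ
    rw [← hTdef] at geom2
    have ha2 : a ^ (2 * δ) = (a ^ 2) ^ δ := by rw [← pow_mul]
    have hb2 : b ^ (2 * δ) = (b ^ 2) ^ δ := by rw [← pow_mul]
    have ha3 : a ^ (2 * δ + 1) = (a ^ 2) ^ δ * a := by rw [← pow_mul, pow_succ]
    have hb3 : b ^ (2 * δ + 1) = (b ^ 2) ^ δ * b := by rw [← pow_mul, pow_succ]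
    rw [ha3, hb3] at geom
    rw [ha2, hb2]
    rw [div_mul_eq_mul_div, div_le_iff₀ (by norm_num : (0:ℝ) < 2)]
    rw [← mul_le_mul_iff_of_pos_right hpos]
    have hkey : 0 ≤ (a + b) ^ 2 * (a - b) * T :=
      mul_nonneg (mul_nonneg (sq_nonneg _) hpos.le) hT
    nlinarith [geom, geom2, hkey]
  rcases lt_trichotomy u v with h | h | h
  · have hsym : (∑ j ∈ Finset.range (2 * δ + 1), u ^ j * v ^ (2 * δ - j))
        = ∑ j ∈ Finset.range (2 * δ + 1), v ^ j * u ^ (2 * δ - j) := by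
      have g1 := geom_sum₂_mul u v (2 * δ + 1)
      have g2 := geom_sum₂_mul v u (2 * δ + 1)
      simp only [Nat.add_sub_cancel] at g1 g2
      have hne : u - v ≠ 0 := sub_ne_zero.mpr h.ne
      apply mul_right_cancel₀ hne
      rw [g1]
      have : (v - u) = -(u - v) := by ring
      nlinarith [g1, g2]
    rw [hsym, add_comm]
    exact key v u h
  · subst h
    have heq : ∀ j ∈ Finset.range (2 * δ + 1), u ^ j * u ^ (2 * δ - j) = u ^ (2 * δ) := by
      intro j hj
      rw [← pow_add]
      congr 1
      simp only [Finset.mem_range] at hj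
      omega
    rw [Finset.sum_congr rfl heq, Finset.sum_const, Finset.card_range, nsmul_eq_mul]
    have h0 : 0 ≤ u ^ (2 * δ) := (even_two_mul δ).pow_nonneg u
    have h1 : (1 : ℝ) ≤ ((2 * δ + 1 : ℕ) : ℝ) := by exact_mod_cast Nat.succ_le_succ (Nat.zero_le _)
    nlinarith
  · exact key u v h
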